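/- (Optimality of η = 1/√2 for the Hadamard gate.) Let {K_i} and {L_i} be finite families of 2×2 complex matrices satisfying Σ_i K_i† K_i = Σ_i L_i† L_i = I, let F_0 be a 2×2 matrix with F_0|0⟩ = |0⟩, and let η > 0 be a real number such that Σ_i K_i ⊗ conj(L_i) = η · U_B† (F_0 ⊗ H) U_B, where U_B = (H⊗I)·CNOT. Then η ≤ 1/√2. -/

import Mathlib

open Matrix Kronecker BigOperators

/-- Single-qubit basis index. -/
abbrev Q2 : Type := ZMod 2

/-- Hadamard `H = (1/√2)[[1,1],[1,-1]]`. -/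
noncomputable def Hm : Matrix Q2 Q2 ℂ :=
  Matrix.of fun i j => (Real.sqrt 2 : ℂ)⁻¹ * (if i = 1 ∧ j = 1 then -1 else 1)

/-- `CNOT(|a⟩⊗|b⟩) = |a⟩⊗|a⊕b⟩`. -/
def CNOTm : Matrix (Q2 × Q2) (Q2 × Q2) ℂ :=
  Matrix.of fun p q => if p.1 = q.1 ∧ p.2 = q.1 + q.2 then 1 else 0

/-- The Bell circuit `U_B = (H⊗I)·CNOT`. -/
noncomputable def UB : Matrix (Q2 × Q2) (Q2 × Q2) ℂ :=
  (Hm ⊗ₖ (1 : Matrix Q2 Q2 ℂ)) * CNOTm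

/-- The basis vector `|0⟩`. -/
def e0 : Q2 → ℂ := fun j => if j = 0 then 1 else 0

/-! The conjugated gate `G = U_B† (F₀ ⊗ H) U_B` has entries
`G (a,b) (c,d) = (H F₀ H) a c * H (a+b) (c+d)`, so pairing it entrywise with the witness
`W (a,b) (c,d) = H (a+b) (c+d)` gives `4 F₀ 0 0 = 4`, and pairing `W` with `η G` gives `4η`.
The same pairing of `W` with `∑ᵢ Kᵢ ⊗ conj Lᵢ` equals `∑ᵢ ⟪Lᵢ, Φ Kᵢ⟫`, where `Φ` contracts `W`
against the first tensor factor and is `√2` times a Hilbert–Schmidt isometry. Trace preservation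
gives `∑ᵢ ‖Lᵢ‖² = ∑ᵢ ‖Kᵢ‖² = 2`, so Cauchy–Schwarz bounds the pairing by `√2 · √4`, whence
`4η ≤ 2√2`. -/

section
variable {ι m n : Type*} [Fintype ι] [Fintype m] [Fintype n]

lemma norm_sum_star_mul_sq_le {J : Type*} [Fintype J] (x y : J → ℂ) :
    ‖∑ j, star (x j) * y j‖ ^ 2 ≤ (∑ j, ‖x j‖ ^ 2) * ∑ j, ‖y j‖ ^ 2 := by
  have htri : ‖∑ j, star (x j) * y j‖ ≤ ∑ j, ‖x j‖ * ‖y j‖ := by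
    simpa only [norm_mul, norm_star] using norm_sum_le Finset.univ fun j => star (x j) * y j
  exact (pow_le_pow_left₀ (norm_nonneg _) htri 2).trans (Finset.sum_mul_sq_le_sq_mul_sq _ _ _)

lemma sum_sum_sum_norm_sq_eq_card_of_sum_conjTranspose_mul_self_eq_one [DecidableEq n]
    (L : ι → Matrix n n ℂ) (hL : ∑ i, (L i)ᴴ * L i = 1) :
    ∑ i, ∑ b, ∑ d, ‖L i b d‖ ^ 2 = Fintype.card n := by
  have htrace := congrArg trace hL
  rw [trace_sum, trace_one] at htrace
  simp only [trace, diag_apply, mul_apply, conjTranspose_apply, Complex.star_def,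
    Complex.conj_mul'] at htrace
  apply Complex.ofReal_injective
  push_cast
  rw [← htrace]
  exact Finset.sum_congr rfl fun i _ => Finset.sum_comm

def partialContract (W : Matrix (m × n) (m × n) ℂ) (K : Matrix m m ℂ) : Matrix n n ℂ :=
  of fun b d => ∑ a, ∑ c, W (a, b) (c, d) * K a c

lemma sum_mul_sum_kronecker_map_conj (W : Matrix (m × n) (m × n) ℂ) (K : ι → Matrix m m ℂ)
    (L : ι → Matrix n n ℂ) :
    ∑ p, ∑ q, W p q * (∑ i, K i ⊗ₖ (L i).map (starRingEnd ℂ)) p q =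
      ∑ i, ∑ b, ∑ d, star (L i b d) * partialContract W (K i) b d := by
  simp only [Matrix.sum_apply, kroneckerMap_apply, map_apply, Fintype.sum_prod_type,
    partialContract, of_apply, Finset.mul_sum]
  rw [Finset.sum_comm]
  simp only [Finset.sum_comm (γ := ι)]
  refine Finset.sum_congr rfl fun b _ => ?_
  conv_rhs => rw [Finset.sum_comm]
  refine Finset.sum_congr rfl fun a _ => ?_
  rw [Finset.sum_comm]
  refine Finset.sum_congr rfl fun c _ => Finset.sum_congr rfl fun d _ =>
    Finset.sum_congr rfl fun i _ => ?_
  rw [Complex.star_def]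
  ring

lemma norm_sum_mul_sum_kronecker_map_conj_sq_le (W : Matrix (m × n) (m × n) ℂ)
    (K : ι → Matrix m m ℂ) (L : ι → Matrix n n ℂ) :
    ‖∑ p, ∑ q, W p q * (∑ i, K i ⊗ₖ (L i).map (starRingEnd ℂ)) p q‖ ^ 2 ≤
      (∑ i, ∑ b, ∑ d, ‖L i b d‖ ^ 2) * ∑ i, ∑ b, ∑ d, ‖partialContract W (K i) b d‖ ^ 2 := by
  rw [sum_mul_sum_kronecker_map_conj]
  simpa only [Fintype.sum_prod_type] using norm_sum_star_mul_sq_le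
    (fun j : ι × n × n => L j.1 j.2.1 j.2.2) (fun j => partialContract W (K j.1) j.2.1 j.2.2)

end

lemma sum_univ_Q2 {M : Type*} [AddCommMonoid M] (f : Q2 → M) : ∑ x : Q2, f x = f 0 + f 1 :=
  Fin.sum_univ_two f

lemma Q2_eq_zero_or_one (a : Q2) : a = 0 ∨ a = 1 := by
  revert a
  decide

@[simp] lemma Hm_zero_zero : Hm 0 0 = (√2 : ℂ)⁻¹ := by simp [Hm]
@[simp] lemma Hm_zero_one : Hm 0 1 = (√2 : ℂ)⁻¹ := by simp [Hm]
@[simp] lemma Hm_one_zero : Hm 1 0 = (√2 : ℂ)⁻¹ := by simp [Hm]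
@[simp] lemma Hm_one_one : Hm 1 1 = -(√2 : ℂ)⁻¹ := by simp [Hm]

lemma inv_sqrt_two_sq : (√2 : ℂ)⁻¹ ^ 2 = 1 / 2 := by
  rw [inv_pow, ← Complex.ofReal_pow, Real.sq_sqrt zero_le_two]
  norm_num

lemma Hm_apply_sq (i j : Q2) : Hm i j ^ 2 = 1 / 2 := by
  rcases Q2_eq_zero_or_one i with rfl | rfl <;> rcases Q2_eq_zero_or_one j with rfl | rfl <;>
    simp only [Hm_zero_zero, Hm_zero_one, Hm_one_zero, Hm_one_one, neg_sq, inv_sqrt_two_sq]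

lemma sum_sum_Hm_mul_mul_Hm (M : Matrix Q2 Q2 ℂ) : ∑ a, ∑ c, (Hm * M * Hm) a c = 2 * M 0 0 := by
  simp only [mul_apply, sum_univ_Q2, Hm_zero_zero, Hm_one_zero, Hm_zero_one, Hm_one_one, mul_neg,
    neg_mul]
  linear_combination (4 * M 0 0) * inv_sqrt_two_sq

lemma UB_apply (a b c d : Q2) :
    UB (a, b) (c, d) = Hm a c * if b = c + d then 1 else 0 := by
  simp only [UB, mul_apply, Fintype.sum_prod_type, sum_univ_Q2, kroneckerMap_apply, CNOTm,
    one_apply, of_apply]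
  rcases Q2_eq_zero_or_one a with rfl | rfl <;> rcases Q2_eq_zero_or_one b with rfl | rfl <;>
    rcases Q2_eq_zero_or_one c with rfl | rfl <;> rcases Q2_eq_zero_or_one d with rfl | rfl <;>
    simp [CharTwo.add_self_eq_zero]

lemma UB_conjTranspose_mul_kronecker_Hm_mul_UB_apply (F0 : Matrix Q2 Q2 ℂ) (a b c d : Q2) :
    (UBᴴ * (F0 ⊗ₖ Hm) * UB) (a, b) (c, d) = (Hm * F0 * Hm) a c * Hm (a + b) (c + d) := by
  simp only [mul_apply, conjTranspose_apply, Fintype.sum_prod_type, UB_apply, kroneckerMap_apply,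
    sum_univ_Q2]
  rcases Q2_eq_zero_or_one a with rfl | rfl <;> rcases Q2_eq_zero_or_one b with rfl | rfl <;>
    rcases Q2_eq_zero_or_one c with rfl | rfl <;> rcases Q2_eq_zero_or_one d with rfl | rfl <;>
    simp [CharTwo.add_self_eq_zero] <;> ring

noncomputable def bellWitness : Matrix (Q2 × Q2) (Q2 × Q2) ℂ :=
  of fun p q => Hm (p.1 + p.2) (q.1 + q.2)

lemma sum_bellWitness_mul_UB_conjTranspose_mul_kronecker_Hm_mul_UB (F0 : Matrix Q2 Q2 ℂ) :
    ∑ p, ∑ q, bellWitness p q * (UBᴴ * (F0 ⊗ₖ Hm) * UB) p q = 4 * F0 0 0 := by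
  simp only [Fintype.sum_prod_type, UB_conjTranspose_mul_kronecker_Hm_mul_UB_apply, bellWitness,
    of_apply]
  calc _ = ∑ a, ∑ c, (Hm * F0 * Hm) a c * ∑ b, ∑ d, Hm (a + b) (c + d) ^ 2 := by
        simp only [sum_univ_Q2]; ring
    _ = 2 * ∑ a, ∑ c, (Hm * F0 * Hm) a c := by
        simp only [Hm_apply_sq, sum_univ_Q2]; ring
    _ = 4 * F0 0 0 := by rw [sum_sum_Hm_mul_mul_Hm]; ring

lemma sum_norm_sq_partialContract_bellWitness (K : Matrix Q2 Q2 ℂ) :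
    ∑ b, ∑ d, ‖partialContract bellWitness K b d‖ ^ 2 = 2 * ∑ a, ∑ c, ‖K a c‖ ^ 2 := by
  apply Complex.ofReal_injective
  push_cast
  simp only [← Complex.mul_conj', sum_univ_Q2, partialContract, bellWitness, of_apply]
  simp only [CharTwo.add_self_eq_zero, Hm_zero_zero, add_zero, Hm_zero_one, Hm_one_zero, Hm_one_one,
    neg_mul, map_add, map_mul, map_inv₀, Complex.conj_ofReal, map_neg, zero_add]
  ring_nf
  rw [inv_sqrt_two_sq]
  ring

theorem hadamard_eta_le_inv_sqrt_two
    {ι : Type} [Fintype ι]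
    (K L : ι → Matrix Q2 Q2 ℂ)
    (hK : ∑ i, (K i)ᴴ * K i = 1)
    (hL : ∑ i, (L i)ᴴ * L i = 1)
    (F0 : Matrix Q2 Q2 ℂ) (hF0 : F0.mulVec e0 = e0)
    (η : ℝ)
    (heq : ∑ i, K i ⊗ₖ (L i).map (starRingEnd ℂ)
      = (η : ℂ) • (UBᴴ * (F0 ⊗ₖ Hm) * UB)) :
    η ≤ (Real.sqrt 2)⁻¹ := by
  have hF00 : F0 0 0 = 1 := by simpa [mulVec, dotProduct, sum_univ_Q2, e0] using congrFun hF0 0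
  have hpair :
      ‖∑ p, ∑ q, bellWitness p q * (∑ i, K i ⊗ₖ (L i).map (starRingEnd ℂ)) p q‖ = 4 * |η| := by
    simp only [heq, Matrix.smul_apply, smul_eq_mul, mul_left_comm _ (η : ℂ), ← Finset.mul_sum,
      sum_bellWitness_mul_UB_conjTranspose_mul_kronecker_Hm_mul_UB, hF00]
    simp [mul_comm]
  have hKmass : ∑ i, ∑ b, ∑ d, ‖partialContract bellWitness (K i) b d‖ ^ 2 = 4 := by
    simp only [sum_norm_sq_partialContract_bellWitness, ← Finset.mul_sum,
      sum_sum_sum_norm_sq_eq_card_of_sum_conjTranspose_mul_self_eq_one K hK, ZMod.card]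
    norm_num
  have hbound := norm_sum_mul_sum_kronecker_map_conj_sq_le bellWitness K L
  rw [hpair, hKmass, sum_sum_sum_norm_sq_eq_card_of_sum_conjTranspose_mul_self_eq_one L hL,
    ZMod.card, Nat.cast_ofNat] at hbound
  calc η ≤ |η| := le_abs_self η
    _ ≤ √(2⁻¹) := Real.abs_le_sqrt (by nlinarith [sq_abs η])
    _ = (√2)⁻¹ := Real.sqrt_inv 2
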